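/- Consistence for constitutive literals: Let D = (F, R, >) be a defeasible deontic theory whose superiority relation > is acyclic (its transitive closure contains no cycle). For every plain literal l, if D ⊢_L +∂_C l and D ⊢_L +∂_C ¬l, then both l ∈ F and ¬l ∈ F, for each variant L ∈ {S, C}. -/

import Mathlib

namespace DDL

/-!
Defeasible Deontic Logic with Meta-Rules (Olivieri, Governatori, Cristani, Rotolo, Sattar).
Syntax: plain literals, modalities, standard rules, rule expressions, (meta-)rules, theories.
-/


/-- Propositional atoms. -/
abbrev Atom := ℕ

/-- Rule labels (names). -/
abbrev Label := ℕ

/-- Plain literals: atoms and negated atoms. -/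
inductive PLit
  | pos : Atom → PLit
  | neg : Atom → PLit
deriving DecidableEq

/-- The complement `~l` of a plain literal. -/
def PLit.compl : PLit → PLit
  | .pos a => .neg a
  | .neg a => .pos a

/-- Modalities: constitutive (C), obligation (O), permission (P). -/
inductive Modality
  | C | O | P
deriving DecidableEq

/-- The two variants of the logic: Simple Conflict (S) and Cautious Conflict (Cau). -/
inductive Variant
  | S | Cau
deriving DecidableEq

/-- Rules are defeasible rules (⇒) or defeaters (⇝). -/
inductive ArrowType
  | defeasible | defeater
deriving DecidableEq

/-- Antecedent elements of standard rules: plain literals `l`,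
deontic literals `□l` and negated deontic literals `¬□l`. -/
inductive LitElem
  | plain : PLit → LitElem
  | mod : Modality → PLit → LitElem
  | negMod : Modality → PLit → LitElem
deriving DecidableEq

/-- A standard rule `α : A(α) ↪_□ C(α)` where the consequent is an ⊗-chain
of plain literals (a singleton unless the mode is O). -/
structure StdRule where
  label : Label
  ants : Finset LitElem
  arrow : ArrowType
  mode : Modality
  head : List PLit
deriving DecidableEq

/-- A rule expression: a standard rule `α` (pos = true) or its negation `¬α` (pos = false). -/
structure RuleExpr where
  rule : StdRule
  pos : Bool
deriving DecidableEq

/-- The complement of a rule expression (α ↦ ¬α, ¬α ↦ α). -/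
def RuleExpr.compl (e : RuleExpr) : RuleExpr := ⟨e.rule, !e.pos⟩

/-- Antecedent elements of (meta-)rules: literal elements, rule expressions `β`,
deontic rule expressions `□β` and negated deontic rule expressions `¬□β`. -/
inductive AntElem
  | lit : LitElem → AntElem
  | rex : RuleExpr → AntElem
  | modRex : Modality → RuleExpr → AntElem
  | negModRex : Modality → RuleExpr → AntElem
deriving DecidableEq

/-- Consequent (⊗-chain) elements: plain literals or rule expressions. -/
inductive ConElem
  | lit : PLit → ConElem
  | rex : RuleExpr → ConElem
deriving DecidableEq

/-- Complement of a consequent element. -/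
def ConElem.compl : ConElem → ConElem
  | .lit l => .lit l.compl
  | .rex e => .rex e.compl

/-- A (possibly meta-) rule: at most one level of nesting, since nested rules
in antecedents and consequents are standard rules. -/
structure Rule where
  label : Label
  ants : Finset AntElem
  arrow : ArrowType
  mode : Modality
  head : List ConElem
deriving DecidableEq

/-- A standard rule viewed as a rule. -/
def StdRule.toRule (r : StdRule) : Rule :=
  ⟨r.label, r.ants.image AntElem.lit, r.arrow, r.mode, r.head.map ConElem.lit⟩

/-- A signed (possibly meta-) rule: a rule or its negation. -/
abbrev SRule := Rule × Bool

def RuleExpr.toSRule (e : RuleExpr) : SRule := (e.rule.toRule, e.pos)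

/-- A defeasible deontic theory `D = (F, R, >)`: a finite set of facts
(plain literals), a finite set of rules, and a superiority relation over rules. -/
structure Theory where
  F : Finset PLit
  R : Finset Rule
  sup : Finset (Rule × Rule)

/-- The standard rule (if any) nested in an antecedent element. -/
def AntElem.nested : AntElem → Option RuleExpr
  | .lit _ => none
  | .rex e => some e
  | .modRex _ e => some e
  | .negModRex _ e => some e

/-- The rules appearing (nested) in a rule. -/
def Rule.nestedRules (r : Rule) : Set Rule :=
  {s | (∃ a ∈ r.ants, ∃ e, a.nested = some e ∧ s = e.rule.toRule) ∨
       (∃ c ∈ r.head, ∃ e, c = ConElem.rex e ∧ s = e.rule.toRule)}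

/-- The rules appearing in a theory: the rules of `R` together with the rules
nested in them. -/
def Theory.rules (D : Theory) : Set Rule :=
  {r | r ∈ D.R ∨ ∃ m ∈ D.R, r ∈ m.nestedRules}

/-- Two rules have the same content when they have the same antecedent, arrow,
mode and consequent (the labels may differ). -/
def Rule.contentEq (r s : Rule) : Prop :=
  r.ants = s.ants ∧ r.arrow = s.arrow ∧ r.mode = s.mode ∧ r.head = s.head

/-- `y` is (a rule expression standing for) the negation of a rule with the same
content as `x`. -/
def SRule.negContentOf (y x : SRule) : Prop :=
  x.1.contentEq y.1 ∧ y.2 = !x.2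

/-- The superiority relation of a theory, as a relation. -/
def Theory.supRel (D : Theory) : Rule → Rule → Prop := fun a b => (a, b) ∈ D.sup

/-- A relation is acyclic when its transitive closure has no cycle. -/
def Acyclic {β : Type*} (r : β → β → Prop) : Prop := ∀ a, ¬ Relation.TransGen r a a

/-- `C(ζ) > C(γ)`: the standard rules concluded by the two meta-rules are in the
superiority relation. -/
def headSup (D : Theory) (ζ γ : Rule) : Prop :=
  ∃ eζ eγ : RuleExpr, ConElem.rex eζ ∈ ζ.head ∧ ConElem.rex eγ ∈ γ.head ∧
    (eζ.rule.toRule, eγ.rule.toRule) ∈ D.sup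

/-- The extended superiority relation
`≻ = > ∪ {(α,β) | (α,β) ∉ > ∧ (C(α),C(β)) ∈ >}`. -/
def Theory.extSupRel (D : Theory) : Rule → Rule → Prop := fun a b =>
  (a, b) ∈ D.sup ∨ ((a, b) ∉ D.sup ∧ headSup D a b)

/-! Conflicts between rules / rule expressions (Definitions 13 and 14). -/

/-- Simple conflict (Definition 13): `β` is the negation of a rule with the same
content as `α` (condition 1), or the consequent ⊗-chains of the two meta-rules
contain, at some indices, simply conflicting rule expressions (condition 2). -/
inductive SimplyConflicts : SRule → SRule → Prop
  | negation {r s : Rule} {b : Bool} :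
      r.contentEq s → SimplyConflicts (r, b) (s, !b)
  | chain {r s : Rule} {br bs : Bool} {ν ζ : RuleExpr} :
      ConElem.rex ν ∈ r.head → ConElem.rex ζ ∈ s.head →
      SimplyConflicts ν.toSRule ζ.toSRule →
      SimplyConflicts (r, br) (s, bs)

/-- Cautious conflict (Definition 14). -/
inductive CautiouslyConflicts : SRule → SRule → Prop
  /-- (1) `β` is the negation of a rule with the same content as `α`. -/
  | negation {r s : Rule} {b : Bool} :
      r.contentEq s → CautiouslyConflicts (r, b) (s, !b)
  /-- (2) same antecedent, arrow and mode, complementary conclusions. -/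
  | oppositeHead {r s : Rule} {c : ConElem} :
      r.ants = s.ants → r.arrow = s.arrow → r.mode = s.mode →
      r.head = [c] → s.head = [c.compl] →
      CautiouslyConflicts (r, true) (s, true)
  /-- (3) an obligation rule and a permission rule with the same antecedent and
  complementary conclusions. -/
  | oblPerm {r s : Rule} {c : ConElem} :
      r.ants = s.ants → r.arrow = s.arrow →
      r.mode = .O → s.mode = .P →
      r.head = [c] → s.head = [c.compl] →
      CautiouslyConflicts (r, true) (s, true)
  /-- (4a) obligation rules with the same antecedent whose ⊗-chains agree up to
  index `i` and have complementary elements at index `i`. -/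
  | chainDiverge {r s : Rule} {i : ℕ} {ci cs : ConElem} :
      r.ants = s.ants → r.arrow = .defeasible → s.arrow = .defeasible →
      r.mode = .O → s.mode = .O →
      (∀ k < i, r.head[k]? = s.head[k]?) →
      r.head[i]? = some ci → s.head[i]? = some cs → ci = cs.compl →
      CautiouslyConflicts (r, true) (s, true)
  /-- (4b) obligation rules with the same antecedent, the ⊗-chain of the first
  being a proper prefix of the ⊗-chain of the second. -/
  | chainPrefix {r s : Rule} :
      r.ants = s.ants → r.arrow = .defeasible → s.arrow = .defeasible →
      r.mode = .O → s.mode = .O →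
      r.head.length < s.head.length →
      r.head <+: s.head →
      CautiouslyConflicts (r, true) (s, true)
  /-- (5) the consequent ⊗-chains of the two meta-rules contain, at some
  indices, cautiously conflicting rule expressions. -/
  | chain {r s : Rule} {br bs : Bool} {ν ζ : RuleExpr} :
      ConElem.rex ν ∈ r.head → ConElem.rex ζ ∈ s.head →
      CautiouslyConflicts ν.toSRule ζ.toSRule →
      CautiouslyConflicts (r, br) (s, bs)

/-- Symmetric closure of simple conflict ("α conflicts with β and the other way
around"). -/
def sConf (x y : SRule) : Prop := SimplyConflicts x y ∨ SimplyConflicts y x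

/-- Symmetric closure of cautious conflict. -/
def cConf (x y : SRule) : Prop := CautiouslyConflicts x y ∨ CautiouslyConflicts y x

/-- The conflict notion associated with each variant of the logic. -/
def Variant.conf : Variant → SRule → SRule → Prop
  | .S => sConf
  | .Cau => cConf

/-! Tagged modal formulas, applicability, proof conditions and provability. -/

/-- A conclusion: a plain literal or a (signed) rule. -/
inductive Concl
  | lit : PLit → Concl
  | rul : Rule → Bool → Concl
deriving DecidableEq

/-- A tagged modal formula `±∂_□ l` / `±∂^m_□ α`: sign (`true` = +, `false` = −),
mode, and conclusion. -/
abbrev Tag := Bool × Modality × Concl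

def ConElem.toConcl : ConElem → Concl
  | .lit l => .lit l
  | .rex e => .rul e.rule.toRule e.pos

/-- An antecedent element holds relative to the set `Pr` of already proved
tagged formulas (Definition 15, conditions 1–3 and 1'–3'). -/
def antHolds (Pr : Tag → Prop) : AntElem → Prop
  | .lit (.plain l) => Pr (true, .C, .lit l)
  | .lit (.mod m l) => Pr (true, m, .lit l)
  | .lit (.negMod m l) => Pr (false, m, .lit l)
  | .rex e => Pr (true, .C, .rul e.rule.toRule e.pos)
  | .modRex m e => Pr (true, m, .rul e.rule.toRule e.pos)
  | .negModRex m e => Pr (false, m, .rul e.rule.toRule e.pos)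

/-- An antecedent element fails, relative to `Pr` (Definition 16). -/
def antFails (Pr : Tag → Prop) : AntElem → Prop
  | .lit (.plain l) => Pr (false, .C, .lit l)
  | .lit (.mod m l) => Pr (false, m, .lit l)
  | .lit (.negMod m l) => Pr (true, m, .lit l)
  | .rex e => Pr (false, .C, .rul e.rule.toRule e.pos)
  | .modRex m e => Pr (false, m, .rul e.rule.toRule e.pos)
  | .negModRex m e => Pr (true, m, .rul e.rule.toRule e.pos)

/-- An earlier ⊗-chain element is a violated obligation (Definition 15, cond. 4). -/
def conViolated (Pr : Tag → Prop) : ConElem → Prop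
  | .lit l => Pr (true, .O, .lit l) ∧ Pr (true, .C, .lit l.compl)
  | .rex e => Pr (true, .O, .rul e.rule.toRule e.pos) ∧ Pr (false, .C, .rul e.rule.toRule e.pos)

/-- Strong negation of `conViolated` (Definition 16, cond. 4). -/
def conNotViolated (Pr : Tag → Prop) : ConElem → Prop
  | .lit l => Pr (false, .O, .lit l) ∨ Pr (false, .C, .lit l.compl)
  | .rex e => Pr (false, .O, .rul e.rule.toRule e.pos) ∨ Pr (true, .C, .rul e.rule.toRule e.pos)

/-- Applicability of a rule (Definition 15): the rule itself is provable with
mode C and every antecedent element holds. -/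
def Applicable (Pr : Tag → Prop) (α : Rule) : Prop :=
  Pr (true, .C, .rul α true) ∧ ∀ a ∈ α.ants, antHolds Pr a

/-- Applicability of an obligation rule at index `i` of its ⊗-chain. -/
def ApplicableAt (Pr : Tag → Prop) (α : Rule) (i : ℕ) : Prop :=
  Applicable Pr α ∧ ∀ j < i, ∀ c, α.head[j]? = some c → conViolated Pr c

/-- Discardability of a rule (Definition 16): strong negation of applicability. -/
def Discarded (Pr : Tag → Prop) (α : Rule) : Prop :=
  Pr (false, .C, .rul α true) ∨ ∃ a ∈ α.ants, antFails Pr a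

/-- Discardability of an obligation rule at index `i`. -/
def DiscardedAt (Pr : Tag → Prop) (α : Rule) (i : ℕ) : Prop :=
  Discarded Pr α ∨ ∃ j < i, ∃ c, α.head[j]? = some c ∧ conNotViolated Pr c

/-- `l` occurs at index `i` of the ⊗-chain of `α`. -/
def Rule.litAt (α : Rule) (l : PLit) (i : ℕ) : Prop := α.head[i]? = some (ConElem.lit l)

/-- The signed rule `x` occurs at index `i` of the ⊗-chain of `α`. -/
def Rule.rexAt (α : Rule) (x : SRule) (i : ℕ) : Prop :=
  ∃ e : RuleExpr, α.head[i]? = some (ConElem.rex e) ∧ e.toSRule = x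

def Rule.concludesLit (α : Rule) (l : PLit) : Prop := ConElem.lit l ∈ α.head

def Rule.concludesRex (α : Rule) (x : SRule) : Prop :=
  ∃ e : RuleExpr, ConElem.rex e ∈ α.head ∧ e.toSRule = x

/-! ### Proof conditions for literals (Definitions 4, 5, 6) -/

/-- `+∂_C l` (Definition 4). -/
def plusC (D : Theory) (Pr : Tag → Prop) (l : PLit) : Prop :=
  l ∈ D.F ∨
  (l.compl ∉ D.F ∧
    (∃ β ∈ D.rules, β.mode = .C ∧ β.arrow = .defeasible ∧ β.concludesLit l ∧
        Applicable Pr β) ∧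
    ∀ γ ∈ D.rules, γ.mode = .C → γ.concludesLit l.compl →
      (Discarded Pr γ ∨
        ∃ ζ ∈ D.rules, ζ.mode = .C ∧ ζ.concludesLit l ∧ Applicable Pr ζ ∧ (ζ, γ) ∈ D.sup))

/-- `−∂_C l` (Definition 4). -/
def minusC (D : Theory) (Pr : Tag → Prop) (l : PLit) : Prop :=
  l ∉ D.F ∧
  (l.compl ∈ D.F ∨
    (∀ β ∈ D.rules, β.mode = .C → β.arrow = .defeasible → β.concludesLit l →
        Discarded Pr β) ∨
    ∃ γ ∈ D.rules, γ.mode = .C ∧ γ.concludesLit l.compl ∧ Applicable Pr γ ∧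
      ∀ ζ ∈ D.rules, ζ.mode = .C → ζ.concludesLit l → (Discarded Pr ζ ∨ (ζ, γ) ∉ D.sup))

/-- `+∂_O l` (Definition 5). -/
def plusO (D : Theory) (Pr : Tag → Prop) (l : PLit) : Prop :=
  (∃ β ∈ D.rules, β.mode = .O ∧ β.arrow = .defeasible ∧
      ∃ i, β.litAt l i ∧ ApplicableAt Pr β i) ∧
  (∀ γ ∈ D.rules,
    (γ.mode = .O → ∀ j, γ.litAt l.compl j →
      (DiscardedAt Pr γ j ∨
        ∃ ζ ∈ D.rules, ζ.mode = .O ∧ (∃ k, ζ.litAt l k ∧ ApplicableAt Pr ζ k) ∧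
          (ζ, γ) ∈ D.sup)) ∧
    (γ.mode = .P → γ.concludesLit l.compl →
      (Discarded Pr γ ∨
        ∃ ζ ∈ D.rules, ζ.mode = .O ∧ (∃ k, ζ.litAt l k ∧ ApplicableAt Pr ζ k) ∧
          (ζ, γ) ∈ D.sup)))

/-- `−∂_O l` (Definition 5). -/
def minusO (D : Theory) (Pr : Tag → Prop) (l : PLit) : Prop :=
  (∀ β ∈ D.rules, β.mode = .O → β.arrow = .defeasible → ∀ i, β.litAt l i →
      DiscardedAt Pr β i) ∨
  (∃ γ ∈ D.rules,
    ((γ.mode = .O ∧ ∃ j, γ.litAt l.compl j ∧ ApplicableAt Pr γ j) ∨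
     (γ.mode = .P ∧ γ.concludesLit l.compl ∧ Applicable Pr γ)) ∧
    ∀ ζ ∈ D.rules, ζ.mode = .O → ∀ k, ζ.litAt l k →
      (DiscardedAt Pr ζ k ∨ (ζ, γ) ∉ D.sup))

/-- `+∂_P l` (Definition 6). -/
def plusP (D : Theory) (Pr : Tag → Prop) (l : PLit) : Prop :=
  Pr (true, .O, .lit l) ∨
  ((∃ β ∈ D.rules, β.mode = .P ∧ β.arrow = .defeasible ∧ β.concludesLit l ∧
      Applicable Pr β) ∧
   ∀ γ ∈ D.rules, γ.mode = .O → ∀ j, γ.litAt l.compl j →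
     (DiscardedAt Pr γ j ∨
      ∃ ζ ∈ D.rules,
        ((ζ.mode = .P ∧ ζ.concludesLit l ∧ Applicable Pr ζ) ∨
         (ζ.mode = .O ∧ ∃ k, ζ.litAt l k ∧ ApplicableAt Pr ζ k)) ∧
        (ζ, γ) ∈ D.sup))

/-- `−∂_P l` (Definition 6). -/
def minusP (D : Theory) (Pr : Tag → Prop) (l : PLit) : Prop :=
  Pr (false, .O, .lit l) ∧
  ∀ β ∈ D.rules, β.mode = .P → β.arrow = .defeasible → β.concludesLit l →
    (Discarded Pr β ∨
     ∃ γ ∈ D.rules, γ.mode = .O ∧ (∃ j, γ.litAt l.compl j ∧ ApplicableAt Pr γ j) ∧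
       ∀ ζ ∈ D.rules,
         (ζ.mode = .P → ζ.concludesLit l → (Discarded Pr ζ ∨ (ζ, γ) ∉ D.sup)) ∧
         (ζ.mode = .O → ∀ k, ζ.litAt l k → (DiscardedAt Pr ζ k ∨ (ζ, γ) ∉ D.sup)))

/-! ### Meta-proof conditions, Simple Conflict variant (Definitions 9, 10, 12) -/

/-- A candidate defeater conclusion `z` for `x` given the attacked expression
`y`: same content and sign as `x`, labelled either as `x` or as `y`
("χ ∈ {α, φ}"). -/
def reinstates (x y z : SRule) : Prop :=
  z.2 = x.2 ∧ z.1.contentEq x.1 ∧ (z.1.label = x.1.label ∨ z.1.label = y.1.label)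

/-- `+∂^m_C α`, simple variant (Definition 9). -/
def plusMCS (D : Theory) (Pr : Tag → Prop) (x : SRule) : Prop :=
  (x.2 = true ∧ x.1 ∈ D.R) ∨
  ((∀ ω ∈ D.R, ¬ sConf (ω, true) x) ∧
   (∃ β ∈ D.rules, β.mode = .C ∧ β.arrow = .defeasible ∧ β.concludesRex x ∧
      Applicable Pr β) ∧
   ∀ γ ∈ D.rules, γ.mode = .C → ∀ y : SRule, γ.concludesRex y → y.negContentOf x →
     (Discarded Pr γ ∨
      ∃ ζ ∈ D.rules, ζ.mode = .C ∧ (∃ z, ζ.concludesRex z ∧ reinstates x y z) ∧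
        Applicable Pr ζ ∧ (ζ, γ) ∈ D.sup))

/-- `−∂^m_C α`, simple variant (Definition 9). -/
def minusMCS (D : Theory) (Pr : Tag → Prop) (x : SRule) : Prop :=
  ¬ (x.2 = true ∧ x.1 ∈ D.R) ∧
  ((∃ ρ ∈ D.R, sConf (ρ, true) x) ∨
   ∀ β ∈ D.rules, β.mode = .C → β.arrow = .defeasible → β.concludesRex x →
     (Discarded Pr β ∨
      ∃ γ ∈ D.rules, γ.mode = .C ∧ (∃ y, γ.concludesRex y ∧ y.negContentOf x ∧
        Applicable Pr γ ∧
        ∀ ζ ∈ D.rules, ζ.mode = .C → ∀ z, ζ.concludesRex z → reinstates x y z →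
          (Discarded Pr ζ ∨ (ζ, γ) ∉ D.sup))))

/-- `+∂^m_O α`, simple variant (Definition 10). -/
def plusMOS (D : Theory) (Pr : Tag → Prop) (x : SRule) : Prop :=
  (∃ β ∈ D.rules, β.mode = .O ∧ β.arrow = .defeasible ∧
      ∃ i, β.rexAt x i ∧ ApplicableAt Pr β i) ∧
  ∀ γ ∈ D.rules, ∀ y : SRule, y.negContentOf x →
    ((γ.mode = .O → ∀ j, γ.rexAt y j →
        (DiscardedAt Pr γ j ∨
         ∃ ζ ∈ D.rules, ζ.mode = .O ∧
           (∃ k z, ζ.rexAt z k ∧ reinstates x y z ∧ ApplicableAt Pr ζ k) ∧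
           (ζ, γ) ∈ D.sup)) ∧
     (γ.mode = .P → γ.concludesRex y →
        (Discarded Pr γ ∨
         ∃ ζ ∈ D.rules, ζ.mode = .O ∧
           (∃ k z, ζ.rexAt z k ∧ reinstates x y z ∧ ApplicableAt Pr ζ k) ∧
           (ζ, γ) ∈ D.sup)))

/-- `−∂^m_O α`, simple variant (Definition 10). -/
def minusMOS (D : Theory) (Pr : Tag → Prop) (x : SRule) : Prop :=
  (∀ β ∈ D.rules, β.mode = .O → β.arrow = .defeasible → ∀ i, β.rexAt x i →
      DiscardedAt Pr β i) ∨
  (∃ γ ∈ D.rules, ∃ y : SRule, y.negContentOf x ∧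
    ((γ.mode = .O ∧ ∃ j, γ.rexAt y j ∧ ApplicableAt Pr γ j) ∨
     (γ.mode = .P ∧ γ.concludesRex y ∧ Applicable Pr γ)) ∧
    ∀ ζ ∈ D.rules, ζ.mode = .O → ∀ k z, ζ.rexAt z k → reinstates x y z →
      (DiscardedAt Pr ζ k ∨ (ζ, γ) ∉ D.sup))

/-- `+∂^m_P α`, simple variant (Definition 12). -/
def plusMPS (D : Theory) (Pr : Tag → Prop) (x : SRule) : Prop :=
  Pr (true, .O, .rul x.1 x.2) ∨
  ((∃ β ∈ D.rules, β.mode = .P ∧ β.arrow = .defeasible ∧ β.concludesRex x ∧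
      Applicable Pr β) ∧
   ∀ γ ∈ D.rules, γ.mode = .O → ∀ y : SRule, y.negContentOf x → ∀ j, γ.rexAt y j →
     (DiscardedAt Pr γ j ∨
      ∃ ζ ∈ D.rules,
        ((ζ.mode = .P ∧ ∃ z, ζ.concludesRex z ∧ reinstates x y z ∧ Applicable Pr ζ) ∨
         (ζ.mode = .O ∧ ∃ k z, ζ.rexAt z k ∧ reinstates x y z ∧ ApplicableAt Pr ζ k)) ∧
        (ζ, γ) ∈ D.sup))

/-- `−∂^m_P α`, simple variant (Definition 12). -/
def minusMPS (D : Theory) (Pr : Tag → Prop) (x : SRule) : Prop :=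
  Pr (false, .O, .rul x.1 x.2) ∧
  ∀ β ∈ D.rules, β.mode = .P → β.arrow = .defeasible → β.concludesRex x →
    (Discarded Pr β ∨
     ∃ γ ∈ D.rules, γ.mode = .O ∧
       (∃ y : SRule, y.negContentOf x ∧ (∃ j, γ.rexAt y j ∧ ApplicableAt Pr γ j) ∧
        ∀ ζ ∈ D.rules,
          ((ζ.mode = .P → ∀ z, ζ.concludesRex z → reinstates x y z →
              (Discarded Pr ζ ∨ (ζ, γ) ∉ D.sup)) ∧
           (ζ.mode = .O → ∀ k z, ζ.rexAt z k → reinstates x y z →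
              (DiscardedAt Pr ζ k ∨ (ζ, γ) ∉ D.sup)))))

/-! ### Meta-proof conditions, Cautious Conflict variant (Definitions 17, 18, 19) -/

/-- The cautious-variant defeat condition on the superiority relation:
`ζ > γ`, or `γ ≯ ζ` and `C(ζ) > C(γ)`. -/
def supC (D : Theory) (ζ γ : Rule) : Prop :=
  (ζ, γ) ∈ D.sup ∨ ((γ, ζ) ∉ D.sup ∧ headSup D ζ γ)

/-- `+∂^m_C α`, cautious variant (Definition 17). -/
def plusMCC (D : Theory) (Pr : Tag → Prop) (x : SRule) : Prop :=
  (x.2 = true ∧ x.1 ∈ D.R) ∨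
  ((∀ ω ∈ D.R, ¬ cConf (ω, true) x) ∧
   ∃ β ∈ D.rules, β.mode = .C ∧ β.arrow = .defeasible ∧ β.concludesRex x ∧
     Applicable Pr β ∧
     ∀ γ ∈ D.rules, γ.mode = .C → cConf (γ, true) (β, true) →
       (Discarded Pr γ ∨
        ∃ ζ ∈ D.rules, ζ.mode = .C ∧ cConf (ζ, true) (γ, true) ∧ Applicable Pr ζ ∧
          supC D ζ γ))

/-- `−∂^m_C α`, cautious variant (Definition 17). -/
def minusMCC (D : Theory) (Pr : Tag → Prop) (x : SRule) : Prop :=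
  ¬ (x.2 = true ∧ x.1 ∈ D.R) ∧
  ((∃ ω ∈ D.R, cConf (ω, true) x) ∨
   ∀ β ∈ D.rules, β.mode = .C → β.arrow = .defeasible → β.concludesRex x →
     (Discarded Pr β ∨
      ∃ γ ∈ D.rules, γ.mode = .C ∧ cConf (γ, true) (β, true) ∧ Applicable Pr γ ∧
        ∀ ζ ∈ D.rules, ζ.mode = .C → cConf (ζ, true) (γ, true) →
          (Discarded Pr ζ ∨ ¬ supC D ζ γ)))

/-- A cautious defeater for an attacking rule `γ`, obligation case (Def. 18). -/
def defeatMOC (D : Theory) (Pr : Tag → Prop) (γ : Rule) : Prop :=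
  ∃ ζ ∈ D.rules, ζ.mode = .O ∧ cConf ((ζ : Rule), true) (γ, true) ∧
    (∃ k z, ζ.rexAt z k ∧ ApplicableAt Pr ζ k) ∧ supC D ζ γ

/-- `+∂^m_O α`, cautious variant (Definition 18). -/
def plusMOC (D : Theory) (Pr : Tag → Prop) (x : SRule) : Prop :=
  ∃ β ∈ D.rules, β.mode = .O ∧ β.arrow = .defeasible ∧
    (∃ i, β.rexAt x i ∧ ApplicableAt Pr β i) ∧
    ∀ γ ∈ D.rules, cConf ((γ : Rule), true) (β, true) →
      ((γ.mode = .O → ∀ j y, γ.rexAt y j → (DiscardedAt Pr γ j ∨ defeatMOC D Pr γ)) ∧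
       (γ.mode = .P → (Discarded Pr γ ∨ defeatMOC D Pr γ)))

/-- `−∂^m_O α`, cautious variant (Definition 18). -/
def minusMOC (D : Theory) (Pr : Tag → Prop) (x : SRule) : Prop :=
  ∀ β ∈ D.rules, β.mode = .O → β.arrow = .defeasible → ∀ i, β.rexAt x i →
    (DiscardedAt Pr β i ∨
     ∃ γ ∈ D.rules, cConf ((γ : Rule), true) (β, true) ∧
       ((γ.mode = .O ∧ ∃ j y, γ.rexAt y j ∧ ApplicableAt Pr γ j) ∨
        (γ.mode = .P ∧ Applicable Pr γ)) ∧
       ∀ ζ ∈ D.rules, ζ.mode = .O → cConf ((ζ : Rule), true) (γ, true) →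
         ((∀ k z, ζ.rexAt z k → DiscardedAt Pr ζ k) ∨ ¬ supC D ζ γ))

/-- A cautious defeater for an attacking rule `γ`, permission case (Def. 19). -/
def defeatMPC (D : Theory) (Pr : Tag → Prop) (γ : Rule) : Prop :=
  ∃ ζ ∈ D.rules, cConf ((ζ : Rule), true) (γ, true) ∧
    ((ζ.mode = .O ∧ ∃ k z, ζ.rexAt z k ∧ ApplicableAt Pr ζ k) ∨
     (ζ.mode = .P ∧ Applicable Pr ζ)) ∧ supC D ζ γ

/-- `+∂^m_P α`, cautious variant (Definition 19). -/
def plusMPC (D : Theory) (Pr : Tag → Prop) (x : SRule) : Prop :=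
  ∃ β ∈ D.rules, β.mode = .P ∧ β.arrow = .defeasible ∧ β.concludesRex x ∧
    Applicable Pr β ∧
    ∀ γ ∈ D.rules, cConf ((γ : Rule), true) (β, true) →
      ((γ.mode = .O → ∀ j y, γ.rexAt y j → (DiscardedAt Pr γ j ∨ defeatMPC D Pr γ)) ∧
       (γ.mode = .P → (Discarded Pr γ ∨ defeatMPC D Pr γ)))

/-- `−∂^m_P α`, cautious variant (Definition 19). -/
def minusMPC (D : Theory) (Pr : Tag → Prop) (x : SRule) : Prop :=
  ∀ β ∈ D.rules, β.mode = .P → β.arrow = .defeasible → β.concludesRex x →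
    (Discarded Pr β ∨
     ∃ γ ∈ D.rules, cConf ((γ : Rule), true) (β, true) ∧
       ((γ.mode = .O ∧ ∃ j y, γ.rexAt y j ∧ ApplicableAt Pr γ j) ∨
        (γ.mode = .P ∧ Applicable Pr γ)) ∧
       ∀ ζ ∈ D.rules, cConf ((ζ : Rule), true) (γ, true) →
         (((ζ.mode = .O → ∀ k z, ζ.rexAt z k → DiscardedAt Pr ζ k) ∧
           (ζ.mode = .P → Discarded Pr ζ)) ∨ ¬ supC D ζ γ))

/-! ### Provability -/

/-- The one-step proof conditions of the logic: `Cond D V Pr t` holds when the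
tagged modal formula `t` may be appended to a proof whose previous steps are
(included in) `Pr`, according to variant `V`. -/
def Cond (D : Theory) (V : Variant) (Pr : Tag → Prop) : Tag → Prop
  | (true, .C, .lit l) => plusC D Pr l
  | (false, .C, .lit l) => minusC D Pr l
  | (true, .O, .lit l) => plusO D Pr l
  | (false, .O, .lit l) => minusO D Pr l
  | (true, .P, .lit l) => plusP D Pr l
  | (false, .P, .lit l) => minusP D Pr l
  | (true, .C, .rul r b) =>
      match V with | .S => plusMCS D Pr (r, b) | .Cau => plusMCC D Pr (r, b)
  | (false, .C, .rul r b) =>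
      match V with | .S => minusMCS D Pr (r, b) | .Cau => minusMCC D Pr (r, b)
  | (true, .O, .rul r b) =>
      match V with | .S => plusMOS D Pr (r, b) | .Cau => plusMOC D Pr (r, b)
  | (false, .O, .rul r b) =>
      match V with | .S => minusMOS D Pr (r, b) | .Cau => minusMOC D Pr (r, b)
  | (true, .P, .rul r b) =>
      match V with | .S => plusMPS D Pr (r, b) | .Cau => plusMPC D Pr (r, b)
  | (false, .P, .rul r b) =>
      match V with | .S => minusMPS D Pr (r, b) | .Cau => minusMPC D Pr (r, b)

/-- The tagged formulas provable by proofs of length at most `n`. -/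
def ProvesAt (D : Theory) (V : Variant) : ℕ → Tag → Prop
  | 0, _ => False
  | n + 1, t => ProvesAt D V n t ∨ Cond D V (ProvesAt D V n) t

/-- `D ⊢_V t`: there is a proof of the tagged modal formula `t` from `D`
according to the proof conditions of variant `V`. -/
def Proves (D : Theory) (V : Variant) (t : Tag) : Prop := ∃ n, ProvesAt D V n t

/-!
Unless `l` is a fact, `+∂_C l` is witnessed by an applicable rule for `l` such that every
applicable rule for `~l` is beaten by an applicable rule for `l`. If this holds for both `l`
and `~l`, then every applicable rule on either side is beaten by an applicable rule on the other
side, an infinite descent in the superiority relation, which is impossible as that relation is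
finite and acyclic. Applicability in one proof and discardability in another never meet, because
the logic is coherent: no formula is proved both with `+∂` and with `−∂`, by induction on the
total length of the two proofs.
-/

@[simp]
theorem PLit.compl_compl (l : PLit) : l.compl.compl = l := by
  cases l <;> rfl

theorem Acyclic.wellFounded {β : Type*} {r : β → β → Prop} (hr : Acyclic r)
    (hfin : {a | ∃ b, r a b}.Finite) : WellFounded r := by
  refine wellFounded_iff_isEmpty_descending_chain.2 ⟨fun ⟨f, hf⟩ => ?_⟩
  obtain ⟨i, j, hij, hfij⟩ := Set.Finite.exists_lt_map_eq_of_forall_mem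
    (f := fun n => f (n + 1)) (t := {a | ∃ b, r a b}) (fun n => ⟨f n, hf n⟩) hfin
  have hchain : Relation.TransGen r (f (j + 1)) (f (i + 1)) :=
    (transGen_of_succ_of_gt (fun m n => r (f m) (f n)) (fun n _ => hf n) (by omega)).lift f
      fun _ _ => id
  rw [← hfij] at hchain
  exact hr _ hchain

theorem Theory.wellFounded_supRel {D : Theory} (hacyc : Acyclic D.supRel) :
    WellFounded D.supRel :=
  hacyc.wellFounded <| (D.sup.image Prod.fst).finite_toSet.subset
    fun a ⟨b, hab⟩ => Finset.mem_image.2 ⟨(a, b), hab, rfl⟩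

def Coherent (Pr Pr' : Tag → Prop) : Prop :=
  ∀ md c, (Pr (true, md, c) → ¬ Pr' (false, md, c)) ∧ (Pr' (true, md, c) → ¬ Pr (false, md, c))

namespace Coherent

variable {Pr Pr' : Tag → Prop} {md : Modality} {c : Concl}

theorem symm (h : Coherent Pr Pr') : Coherent Pr' Pr :=
  fun md c => (h md c).symm

theorem not_neg (h : Coherent Pr Pr') (hp : Pr (true, md, c)) : ¬ Pr' (false, md, c) :=
  (h md c).1 hp

theorem not_pos (h : Coherent Pr Pr') (hm : Pr (false, md, c)) : ¬ Pr' (true, md, c) :=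
  fun hp => (h md c).2 hp hm

theorem not_antFails (h : Coherent Pr Pr') {a : AntElem} (ha : antHolds Pr a) :
    ¬ antFails Pr' a := by
  rcases a with (_ | _ | _) | _ | _ | _ <;> first | exact h.not_neg ha | exact h.not_pos ha

theorem not_conNotViolated (h : Coherent Pr Pr') {c : ConElem} (hc : conViolated Pr c) :
    ¬ conNotViolated Pr' c := by
  rcases c with l | e <;> rintro (hn | hn)
  · exact h.not_neg hc.1 hn
  · exact h.not_neg hc.2 hn
  · exact h.not_neg hc.1 hn
  · exact h.not_pos hc.2 hn

theorem not_discarded (h : Coherent Pr Pr') {r : Rule} (ha : Applicable Pr r) :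
    ¬ Discarded Pr' r := by
  rintro (hd | ⟨a, haR, hf⟩)
  · exact h.not_neg ha.1 hd
  · exact h.not_antFails (ha.2 a haR) hf

theorem not_discardedAt (h : Coherent Pr Pr') {r : Rule} {i : ℕ} (ha : ApplicableAt Pr r i) :
    ¬ DiscardedAt Pr' r i := by
  rintro (hd | ⟨j, hj, c, hc, hnv⟩)
  · exact h.not_discarded ha.1 hd
  · exact h.not_conNotViolated (ha.2 j hj c hc) hnv

variable {D : Theory} {l : PLit} {x : SRule}

theorem not_minusC (h : Coherent Pr Pr') (hp : plusC D Pr l) : ¬ minusC D Pr' l := by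
  rintro ⟨hnF, hm⟩
  rcases hp with hF | ⟨hncF, ⟨β, hβR, hβC, hβd, hβc, hβa⟩, hall⟩
  · exact hnF hF
  rcases hm with h' | h' | ⟨γ, hγR, hγC, hγc, hγa, hζall⟩
  · exact hncF h'
  · exact h.not_discarded hβa (h' β hβR hβC hβd hβc)
  rcases hall γ hγR hγC hγc with hd | ⟨ζ, hζR, hζC, hζc, hζa, hsup⟩
  · exact h.symm.not_discarded hγa hd
  rcases hζall ζ hζR hζC hζc with hd | hns
  · exact h.not_discarded hζa hd
  · exact hns hsup

theorem not_minusO (h : Coherent Pr Pr') (hp : plusO D Pr l) : ¬ minusO D Pr' l := by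
  obtain ⟨⟨β, hβR, hβO, hβd, i, hlit, happ⟩, hall⟩ := hp
  rintro (h' | ⟨γ, hγR, hcase, hζall⟩)
  · exact h.not_discardedAt happ (h' β hβR hβO hβd i hlit)
  rcases hcase with ⟨hγO, j, hlitj, happj⟩ | ⟨hγP, hγc, hγa⟩
  · rcases (hall γ hγR).1 hγO j hlitj with hd | ⟨ζ, hζR, hζO, ⟨k, hlitk, happk⟩, hsup⟩
    · exact h.symm.not_discardedAt happj hd
    rcases hζall ζ hζR hζO k hlitk with hd | hns
    · exact h.not_discardedAt happk hd
    · exact hns hsup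
  · rcases (hall γ hγR).2 hγP hγc with hd | ⟨ζ, hζR, hζO, ⟨k, hlitk, happk⟩, hsup⟩
    · exact h.symm.not_discarded hγa hd
    rcases hζall ζ hζR hζO k hlitk with hd | hns
    · exact h.not_discardedAt happk hd
    · exact hns hsup

theorem not_minusP (h : Coherent Pr Pr') (hp : plusP D Pr l) : ¬ minusP D Pr' l := by
  rintro ⟨hO, hall'⟩
  rcases hp with h' | ⟨⟨β, hβR, hβP, hβd, hβc, hβa⟩, hall⟩
  · exact h.not_neg h' hO
  rcases hall' β hβR hβP hβd hβc with hd | ⟨γ, hγR, hγO, ⟨j, hlitj, happj⟩, hζall⟩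
  · exact h.not_discarded hβa hd
  rcases hall γ hγR hγO j hlitj with hd | ⟨ζ, hζR, hcase, hsup⟩
  · exact h.symm.not_discardedAt happj hd
  rcases hcase with ⟨hζP, hζc, hζa⟩ | ⟨hζO, k, hlitk, happk⟩
  · rcases (hζall ζ hζR).1 hζP hζc with hd | hns
    · exact h.not_discarded hζa hd
    · exact hns hsup
  · rcases (hζall ζ hζR).2 hζO k hlitk with hd | hns
    · exact h.not_discardedAt happk hd
    · exact hns hsup

theorem not_minusMCS (h : Coherent Pr Pr') (hp : plusMCS D Pr x) : ¬ minusMCS D Pr' x := by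
  rintro ⟨hneg, hm⟩
  rcases hp with h' | ⟨hnoconf, ⟨β, hβR, hβC, hβd, hβc, hβa⟩, hall⟩
  · exact hneg h'
  rcases hm with ⟨ρ, hρ, hconf⟩ | h'
  · exact hnoconf ρ hρ hconf
  rcases h' β hβR hβC hβd hβc with hd | ⟨γ, hγR, hγC, y, hyc, hyn, hγa, hζall⟩
  · exact h.not_discarded hβa hd
  rcases hall γ hγR hγC y hyc hyn with hd | ⟨ζ, hζR, hζC, ⟨z, hzc, hre⟩, hζa, hsup⟩
  · exact h.symm.not_discarded hγa hd
  rcases hζall ζ hζR hζC z hzc hre with hd | hns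
  · exact h.not_discarded hζa hd
  · exact hns hsup

theorem not_minusMOS (h : Coherent Pr Pr') (hp : plusMOS D Pr x) : ¬ minusMOS D Pr' x := by
  obtain ⟨⟨β, hβR, hβO, hβd, i, hrex, happ⟩, hall⟩ := hp
  rintro (h' | ⟨γ, hγR, y, hyn, hcase, hζall⟩)
  · exact h.not_discardedAt happ (h' β hβR hβO hβd i hrex)
  rcases hcase with ⟨hγO, j, hrexj, happj⟩ | ⟨hγP, hγc, hγa⟩
  · rcases (hall γ hγR y hyn).1 hγO j hrexj with
      hd | ⟨ζ, hζR, hζO, ⟨k, z, hrexk, hre, happk⟩, hsup⟩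
    · exact h.symm.not_discardedAt happj hd
    rcases hζall ζ hζR hζO k z hrexk hre with hd | hns
    · exact h.not_discardedAt happk hd
    · exact hns hsup
  · rcases (hall γ hγR y hyn).2 hγP hγc with
      hd | ⟨ζ, hζR, hζO, ⟨k, z, hrexk, hre, happk⟩, hsup⟩
    · exact h.symm.not_discarded hγa hd
    rcases hζall ζ hζR hζO k z hrexk hre with hd | hns
    · exact h.not_discardedAt happk hd
    · exact hns hsup

theorem not_minusMPS (h : Coherent Pr Pr') (hp : plusMPS D Pr x) : ¬ minusMPS D Pr' x := by
  rintro ⟨hO, hall'⟩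
  rcases hp with h' | ⟨⟨β, hβR, hβP, hβd, hβc, hβa⟩, hall⟩
  · exact h.not_neg h' hO
  rcases hall' β hβR hβP hβd hβc with hd | ⟨γ, hγR, hγO, y, hyn, ⟨j, hrexj, happj⟩, hζall⟩
  · exact h.not_discarded hβa hd
  rcases hall γ hγR hγO y hyn j hrexj with hd | ⟨ζ, hζR, hcase, hsup⟩
  · exact h.symm.not_discardedAt happj hd
  rcases hcase with ⟨hζP, z, hzc, hre, hζa⟩ | ⟨hζO, k, z, hrexk, hre, happk⟩
  · rcases (hζall ζ hζR).1 hζP z hzc hre with hd | hns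
    · exact h.not_discarded hζa hd
    · exact hns hsup
  · rcases (hζall ζ hζR).2 hζO k z hrexk hre with hd | hns
    · exact h.not_discardedAt happk hd
    · exact hns hsup

theorem not_minusMCC (h : Coherent Pr Pr') (hp : plusMCC D Pr x) : ¬ minusMCC D Pr' x := by
  rintro ⟨hneg, hm⟩
  rcases hp with h' | ⟨hnoconf, β, hβR, hβC, hβd, hβc, hβa, hall⟩
  · exact hneg h'
  rcases hm with ⟨ω, hω, hconf⟩ | h'
  · exact hnoconf ω hω hconf
  rcases h' β hβR hβC hβd hβc with hd | ⟨γ, hγR, hγC, hγconf, hγa, hζall⟩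
  · exact h.not_discarded hβa hd
  rcases hall γ hγR hγC hγconf with hd | ⟨ζ, hζR, hζC, hζconf, hζa, hsup⟩
  · exact h.symm.not_discarded hγa hd
  rcases hζall ζ hζR hζC hζconf with hd | hns
  · exact h.not_discarded hζa hd
  · exact hns hsup

theorem not_minusMOC (h : Coherent Pr Pr') (hp : plusMOC D Pr x) : ¬ minusMOC D Pr' x := by
  obtain ⟨β, hβR, hβO, hβd, ⟨i, hrex, happ⟩, hall⟩ := hp
  intro hm
  rcases hm β hβR hβO hβd i hrex with hd | ⟨γ, hγR, hγconf, hcase, hζall⟩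
  · exact h.not_discardedAt happ hd
  have hdefeated : ∀ ζ ∈ D.rules, ζ.mode = .O → cConf (ζ, true) (γ, true) →
      ∀ k z, ζ.rexAt z k → ApplicableAt Pr ζ k → ¬ supC D ζ γ := by
    intro ζ hζR hζO hζconf k z hrexk happk
    rcases hζall ζ hζR hζO hζconf with hdall | hns
    · exact absurd (hdall k z hrexk) (h.not_discardedAt happk)
    · exact hns
  rcases hcase with ⟨hγO, j, y, hrexj, happj⟩ | ⟨hγP, hγa⟩
  · rcases (hall γ hγR hγconf).1 hγO j y hrexj with
      hd | ⟨ζ, hζR, hζO, hζconf, ⟨k, z, hrexk, happk⟩, hsup⟩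
    · exact h.symm.not_discardedAt happj hd
    · exact hdefeated ζ hζR hζO hζconf k z hrexk happk hsup
  · rcases (hall γ hγR hγconf).2 hγP with
      hd | ⟨ζ, hζR, hζO, hζconf, ⟨k, z, hrexk, happk⟩, hsup⟩
    · exact h.symm.not_discarded hγa hd
    · exact hdefeated ζ hζR hζO hζconf k z hrexk happk hsup

theorem not_minusMPC (h : Coherent Pr Pr') (hp : plusMPC D Pr x) : ¬ minusMPC D Pr' x := by
  obtain ⟨β, hβR, hβP, hβd, hβc, hβa, hall⟩ := hp
  intro hm
  rcases hm β hβR hβP hβd hβc with hd | ⟨γ, hγR, hγconf, hcase, hζall⟩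
  · exact h.not_discarded hβa hd
  have hdefeated : ¬ defeatMPC D Pr γ := by
    rintro ⟨ζ, hζR, hζconf, hζcase, hsup⟩
    rcases hζall ζ hζR hζconf with ⟨hO, hP⟩ | hns
    · rcases hζcase with ⟨hζO, k, z, hrexk, happk⟩ | ⟨hζP, hζa⟩
      · exact h.not_discardedAt happk (hO hζO k z hrexk)
      · exact h.not_discarded hζa (hP hζP)
    · exact hns hsup
  rcases hcase with ⟨hγO, j, y, hrexj, happj⟩ | ⟨hγP, hγa⟩
  · rcases (hall γ hγR hγconf).1 hγO j y hrexj with hd | hdef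
    · exact h.symm.not_discardedAt happj hd
    · exact hdefeated hdef
  · rcases (hall γ hγR hγconf).2 hγP with hd | hdef
    · exact h.symm.not_discarded hγa hd
    · exact hdefeated hdef

theorem not_cond_neg (h : Coherent Pr Pr') {V : Variant}
    (hp : Cond D V Pr (true, md, c)) : ¬ Cond D V Pr' (false, md, c) := by
  rcases c with l | ⟨r, b⟩
  · cases md
    exacts [h.not_minusC hp, h.not_minusO hp, h.not_minusP hp]
  · cases V <;> cases md
    exacts [h.not_minusMCS hp, h.not_minusMOS hp, h.not_minusMPS hp,
      h.not_minusMCC hp, h.not_minusMOC hp, h.not_minusMPC hp]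

theorem provesAt_succ {D : Theory} {V : Variant} {a b : ℕ}
    (h₁ : Coherent (ProvesAt D V a) (ProvesAt D V (b + 1)))
    (h₂ : Coherent (ProvesAt D V (a + 1)) (ProvesAt D V b))
    (h₃ : Coherent (ProvesAt D V a) (ProvesAt D V b)) :
    Coherent (ProvesAt D V (a + 1)) (ProvesAt D V (b + 1)) := by
  refine fun md c => ⟨?_, ?_⟩
  · rintro (hp | hp) (hm | hm)
    exacts [h₁.not_neg hp (Or.inl hm), h₁.not_neg hp (Or.inr hm), h₂.not_neg (Or.inr hp) hm,
      h₃.not_cond_neg hp hm]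
  · rintro (hp | hp) (hm | hm)
    exacts [h₂.symm.not_neg hp (Or.inl hm), h₂.symm.not_neg hp (Or.inr hm),
      h₁.symm.not_neg (Or.inr hp) hm, h₃.symm.not_cond_neg hp hm]

end Coherent

theorem coherent_provesAt (D : Theory) (V : Variant) :
    ∀ n m, Coherent (ProvesAt D V n) (ProvesAt D V m)
  | 0, _ => fun _ _ => ⟨False.elim, fun _ => False.elim⟩
  | _ + 1, 0 => fun _ _ => ⟨fun _ => False.elim, False.elim⟩
  | a + 1, b + 1 => (coherent_provesAt D V a (b + 1)).provesAt_succ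
      (coherent_provesAt D V (a + 1) b) (coherent_provesAt D V a b)
termination_by n m => n + m

theorem Proves.exists_cond {D : Theory} {V : Variant} {t : Tag} (h : Proves D V t) :
    ∃ k, Cond D V (ProvesAt D V k) t := by
  obtain ⟨n, hn⟩ := h
  induction n with
  | zero => exact hn.elim
  | succ n ih => exact hn.elim ih fun h => ⟨n, h⟩

/-- The last conjunct of `plusC D Pr l`. -/
def AttacksDefeated (D : Theory) (Pr : Tag → Prop) (l : PLit) : Prop :=
  ∀ γ ∈ D.rules, γ.mode = .C → γ.concludesLit l.compl →
    (Discarded Pr γ ∨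
      ∃ ζ ∈ D.rules, ζ.mode = .C ∧ ζ.concludesLit l ∧ Applicable Pr ζ ∧ (ζ, γ) ∈ D.sup)

theorem AttacksDefeated.exists_superior {D : Theory} {Pr Pr' : Tag → Prop} {l : PLit}
    (h : AttacksDefeated D Pr l) (hcoh : Coherent Pr' Pr) {γ : Rule} (hγR : γ ∈ D.rules)
    (hγC : γ.mode = .C) (hγl : γ.concludesLit l.compl) (hγa : Applicable Pr' γ) :
    ∃ ζ ∈ D.rules, ζ.mode = .C ∧ ζ.concludesLit l ∧ Applicable Pr ζ ∧ D.supRel ζ γ :=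
  (h γ hγR hγC hγl).resolve_left (hcoh.not_discarded hγa)

theorem not_attacksDefeated_and_compl {D : Theory} {Pr Pr' : Tag → Prop} {l : PLit}
    (hwf : WellFounded D.supRel) (hcoh : Coherent Pr Pr') {β : Rule} (hβR : β ∈ D.rules)
    (hβC : β.mode = .C) (hβl : β.concludesLit l.compl) (hβa : Applicable Pr' β)
    (h : AttacksDefeated D Pr l) (h' : AttacksDefeated D Pr' l.compl) : False := by
  let S : Set Rule := {r | r ∈ D.rules ∧ r.mode = .C ∧
    ((r.concludesLit l ∧ Applicable Pr r) ∨ (r.concludesLit l.compl ∧ Applicable Pr' r))}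
  obtain ⟨γ, ⟨hγR, hγC, hγ⟩, hmin⟩ := hwf.has_min S ⟨β, hβR, hβC, Or.inr ⟨hβl, hβa⟩⟩
  rcases hγ with ⟨hγl, hγa⟩ | ⟨hγl, hγa⟩
  · rw [← PLit.compl_compl l] at hγl
    obtain ⟨ζ, hζR, hζC, hζl, hζa, hsup⟩ := h'.exists_superior hcoh hγR hγC hγl hγa
    exact hmin ζ ⟨hζR, hζC, Or.inr ⟨hζl, hζa⟩⟩ hsup
  · obtain ⟨ζ, hζR, hζC, hζl, hζa, hsup⟩ := h.exists_superior hcoh.symm hγR hγC hγl hγa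
    exact hmin ζ ⟨hζR, hζC, Or.inl ⟨hζl, hζa⟩⟩ hsup

/-- **Consistence for constitutive literals** (Theorem 2, item 1). If the
superiority relation of `D` is acyclic and both `+∂_C l` and `+∂_C ¬l` are
provable (in either variant), then both `l` and `¬l` are facts of `D`. -/
theorem consistence_constitutive (D : Theory) (L : Variant) (l : PLit)
    (hacyc : Acyclic D.supRel)
    (h1 : Proves D L (true, .C, .lit l))
    (h2 : Proves D L (true, .C, .lit l.compl)) :
    l ∈ D.F ∧ l.compl ∈ D.F := by
  obtain ⟨k₁, hp₁⟩ := h1.exists_cond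
  obtain ⟨k₂, hp₂⟩ := h2.exists_cond
  rcases hp₁ with hF₁ | ⟨hnF₁, -, hdef₁⟩ <;>
    rcases hp₂ with hF₂ | ⟨hnF₂, ⟨β, hβR, hβC, -, hβl, hβa⟩, hdef₂⟩
  · exact ⟨hF₁, hF₂⟩
  · rw [PLit.compl_compl] at hnF₂
    exact absurd hF₁ hnF₂
  · exact absurd hF₂ hnF₁
  · exact (not_attacksDefeated_and_compl (Theory.wellFounded_supRel hacyc)
      (coherent_provesAt D L k₁ k₂) hβR hβC hβl hβa hdef₁ hdef₂).elim

end DDL
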